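/- Let X be a simplicial complex on vertex set V. If all the missing faces of X have dimension at most d (i.e., size at most d + 1), then C(X) ≤ ⌊d·|V| / (d + 1)⌋. -/

import Mathlib

/-!
Write `X = (X ∖ v) ∪ v ∗ lk(X, v)`. An elementary collapse of the link by a free face `σ ⊆ τ`
lifts to the elementary collapse of `X` by `v ∪ σ ⊆ v ∪ τ`, which leaves `X ∖ v` untouched, so
`C(X) ≤ max(C(lk(X, v)) + 1, C(X ∖ v))`.

Let `f(m) = ⌊dm/(d + 1)⌋`. By induction on the number `m` of vertices,
`C(X) ≤ |τ| - 1 + f(m - |τ|)` for every missing face `τ`: split at a vertex `v ∈ τ`. Then `X ∖ v`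
has at most `m - 1` vertices, and `τ ∖ v` is not a face of the link, so either it contains a
missing face of the link, or the link misses a second vertex of `τ`. Missing faces of `X ∖ v` and
of the link stay small, since a missing face `ρ` of the link is missing in `X` or `v ∪ ρ` is.
As `|τ| ≤ d + 1`, the bound is at most `f(m)`; a complex without missing faces is a simplex.
-/

namespace PaperKL

open Finset

variable {V : Type*}

section Complexes
variable [DecidableEq V]

/-- A (finite) abstract simplicial complex: a family of finite sets closed under
taking subsets. -/
def IsSimplicialComplex (X : Finset (Finset V)) : Prop :=
  ∀ σ ∈ X, ∀ τ ⊆ σ, τ ∈ X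

/-- `σ` is a free face of `X`, with `τ` the unique maximal face of `X` containing it:
equivalently, every face of `X` containing `σ` is contained in `τ`. -/
def IsFreeFace (X : Finset (Finset V)) (σ τ : Finset V) : Prop :=
  σ ∈ X ∧ τ ∈ X ∧ σ ⊆ τ ∧ ∀ η ∈ X, σ ⊆ η → η ⊆ τ

/-- `Y` is obtained from `X` by an elementary `d`-collapse. -/
def ElemCollapse (d : ℕ) (X Y : Finset (Finset V)) : Prop :=
  ∃ σ τ : Finset V, IsFreeFace X σ τ ∧ σ.card ≤ d ∧
    Y = X.filter fun η => ¬(σ ⊆ η ∧ η ⊆ τ)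

/-- `X` is `d`-collapsible: some sequence of elementary `d`-collapses reduces `X`
to the void complex `∅`. -/
def Collapsible (d : ℕ) (X : Finset (Finset V)) : Prop :=
  Relation.ReflTransGen (ElemCollapse d) X ∅

/-- The collapsibility number `C(X)`: the minimum `d` such that `X` is `d`-collapsible. -/
noncomputable def collapseNum (X : Finset (Finset V)) : ℕ :=
  sInf {d | Collapsible d X}

/-- The link `lk(X, τ) = {η ∈ X : η ∩ τ = ∅, η ∪ τ ∈ X}`. -/
def link (X : Finset (Finset V)) (τ : Finset V) : Finset (Finset V) :=
  X.filter fun η => η ∩ τ = ∅ ∧ η ∪ τ ∈ X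

/-- Deletion of a vertex: `X \ v`. -/
def deleteVert (X : Finset (Finset V)) (v : V) : Finset (Finset V) :=
  X.filter fun σ => v ∉ σ

/-- The induced subcomplex on the complement of `S`: `X[V \ S]`. -/
def deleteSet (X : Finset (Finset V)) (S : Finset V) : Finset (Finset V) :=
  X.filter fun σ => σ ∩ S = ∅

/-- The vertex set of a complex: the union of its faces. -/
def vertexSet (X : Finset (Finset V)) : Finset V := X.sup id

/-- The join `X ∗ Y = {σ ∪ τ : σ ∈ X, τ ∈ Y}`. -/
def joinSC (X Y : Finset (Finset V)) : Finset (Finset V) :=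
  (X ×ˢ Y).image fun p => p.1 ∪ p.2

/-- `τ` is a maximal face of `X`. -/
def IsMaximalFace (X : Finset (Finset V)) (τ : Finset V) : Prop :=
  τ ∈ X ∧ ∀ η ∈ X, τ ⊆ η → η = τ

/-- `X` is a cone over `v`: every maximal face of `X` contains `v`. -/
def IsConeOver (X : Finset (Finset V)) (v : V) : Prop :=
  ∀ τ, IsMaximalFace X τ → v ∈ τ

/-- A missing face of `X`: a subset of the vertex set which is not a face,
all of whose proper subsets are faces. -/
def IsMissingFace (X : Finset (Finset V)) (τ : Finset V) : Prop :=
  τ ⊆ vertexSet X ∧ τ ∉ X ∧ ∀ σ ⊂ τ, σ ∈ X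

end Complexes

/-- A finset is an independent set in the graph `G`. -/
def IsIndepSet (G : SimpleGraph V) (s : Finset V) : Prop :=
  ∀ u ∈ s, ∀ v ∈ s, ¬ G.Adj u v

section Graphs
variable [DecidableEq V]

/-- The complex `I_n(G[W])` of the induced subgraph `G[W]`, realized as the family of
subsets `U ⊆ W` such that `U` contains no independent set of `G` of size `n`. -/
noncomputable def indComplexOn (G : SimpleGraph V) (W : Finset V) (n : ℕ) :
    Finset (Finset V) :=
  @Finset.filter _ (fun U => ¬ ∃ I ⊆ U, I.card = n ∧ IsIndepSet G I)
    (Classical.decPred _) W.powerset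

variable [Fintype V]

/-- The complex `I_n(G)`: subsets of `V` containing no independent set of size `n`. -/
noncomputable def indComplex (G : SimpleGraph V) (n : ℕ) : Finset (Finset V) :=
  indComplexOn G Finset.univ n

/-- The open neighborhood of `v` as a finset. -/
noncomputable def nbrsFinset (G : SimpleGraph V) (v : V) : Finset V :=
  @Finset.filter _ (fun u => G.Adj v u) (Classical.decPred _) Finset.univ

/-- Filter of a finset by an arbitrary predicate (classical decidability). -/
noncomputable def cfilter (p : V → Prop) (s : Finset V) : Finset V :=
  @Finset.filter _ p (Classical.decPred _) s

end Graphs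

/-- `G` has maximum degree at most `Δ`. -/
def MaxDegLE (G : SimpleGraph V) (Δ : ℕ) : Prop :=
  ∀ v : V, (G.neighborSet v).ncard ≤ Δ

/-- `G` is claw-free: it has no induced subgraph isomorphic to `K_{1,3}`. -/
def ClawFree (G : SimpleGraph V) : Prop :=
  ¬ ∃ a b c d : V, b ≠ c ∧ b ≠ d ∧ c ≠ d ∧
    G.Adj a b ∧ G.Adj a c ∧ G.Adj a d ∧ ¬G.Adj b c ∧ ¬G.Adj b d ∧ ¬G.Adj c d

/-- `G` is chordal: it has no induced cycle of length at least 4. -/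
def IsChordal (G : SimpleGraph V) : Prop :=
  ∀ m : ℕ, 4 ≤ m → ¬ ∃ f : ZMod m → V, Function.Injective f ∧
    ∀ i j : ZMod m, G.Adj (f i) (f j) ↔ (j = i + 1 ∨ i = j + 1)

/-- `v` is a simplicial vertex of `G`: its closed neighborhood is a clique. -/
def IsSimplicialVertex (G : SimpleGraph V) (v : V) : Prop :=
  ∀ a b : V, G.Adj v a → G.Adj v b → a ≠ b → G.Adj a b

/-- The connected component of `v` in `G` is a path: its vertices can be enumerated
as `f 0, …, f m` with adjacency exactly between consecutive vertices. -/
def InPathComponent (G : SimpleGraph V) (v : V) : Prop :=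
  ∃ (m : ℕ) (f : Fin (m + 1) → V), Function.Injective f ∧
    (∀ w, G.Reachable v w ↔ ∃ i, f i = w) ∧
    (∀ i j : Fin (m + 1), G.Adj (f i) (f j) ↔ ((i : ℕ) + 1 = (j : ℕ) ∨ (j : ℕ) + 1 = (i : ℕ)))

/-- The collection `A 0, …, A (t-1)` of independent sets of `G` admits a rainbow
independent set of size `n`: there are indices `g 0 < ⋯ < g (n-1)` and distinct
vertices `a j ∈ A (g j)` forming an independent set of `G`. -/
def HasRainbowIndepSet [DecidableEq V] (G : SimpleGraph V) (n : ℕ) {t : ℕ} (A : Fin t → Finset V) : Prop :=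
  ∃ (g : Fin n → Fin t) (a : Fin n → V), StrictMono g ∧ Function.Injective a ∧
    (∀ j, a j ∈ A (g j)) ∧ IsIndepSet G (Finset.image a Finset.univ)

section FGraphs
variable [DecidableEq V] [Fintype V]

/-- `f_G(n)`: the minimum `t` such that every collection of `t` independent sets of
size `n` in `G` has a rainbow independent set of size `n`. -/
noncomputable def fRainbow (G : SimpleGraph V) (n : ℕ) : ℕ :=
  sInf {t | ∀ A : Fin t → Finset V,
    (∀ i, IsIndepSet G (A i) ∧ (A i).card = n) → HasRainbowIndepSet G n A}

/-- The independence number `α(G)`. -/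
noncomputable def indepNum (G : SimpleGraph V) : ℕ :=
  (@Finset.filter _ (fun s => IsIndepSet G s) (Classical.decPred _)
    (Finset.univ : Finset V).powerset).sup Finset.card

end FGraphs

theorem mul_div_succ_le_of_le_add {d x y j : ℕ} (h : x ≤ y + j) :
    d * x / (d + 1) ≤ j + d * y / (d + 1) :=
  calc d * x / (d + 1) ≤ (d * y + j * (d + 1)) / (d + 1) :=
        Nat.div_le_div_right (by nlinarith)
    _ = j + d * y / (d + 1) := by rw [Nat.add_mul_div_right _ _ d.succ_pos, add_comm]

theorem sub_one_add_mul_sub_div_succ_le {d k n : ℕ} (hkd : k ≤ d + 1) (hkn : k ≤ n) :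
    k - 1 + d * (n - k) / (d + 1) ≤ d * n / (d + 1) := by
  obtain ⟨m, rfl⟩ := Nat.exists_eq_add_of_le hkn
  rcases k with _ | j
  · simp
  · rw [Nat.add_sub_cancel_left, Nat.add_sub_cancel, add_comm,
      ← Nat.add_mul_div_right _ _ d.succ_pos]
    exact Nat.div_le_div_right (by nlinarith)

section

variable {X : Finset (Finset V)} {v : V} {ρ : Finset V} {d : ℕ}

theorem IsSimplicialComplex.empty_mem (hX : IsSimplicialComplex X) (hne : X.Nonempty) :
    ∅ ∈ X := by
  obtain ⟨σ, hσ⟩ := hne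
  exact hX σ hσ ∅ (empty_subset σ)

variable [DecidableEq V]

theorem mem_vertexSet {u : V} : u ∈ vertexSet X ↔ ∃ σ ∈ X, u ∈ σ := by
  simp [vertexSet, mem_sup]

theorem subset_vertexSet {σ : Finset V} (hσ : σ ∈ X) : σ ⊆ vertexSet X :=
  le_sup (f := id) hσ

theorem IsSimplicialComplex.singleton_mem (hX : IsSimplicialComplex X)
    (hv : v ∈ vertexSet X) : {v} ∈ X := by
  obtain ⟨σ, hσ, hvσ⟩ := mem_vertexSet.1 hv
  exact hX σ hσ {v} (singleton_subset_iff.2 hvσ)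

theorem mem_link_singleton {η : Finset V} :
    η ∈ link X {v} ↔ η ∈ X ∧ v ∉ η ∧ insert v η ∈ X := by
  simp [link, union_singleton, ← disjoint_iff_inter_eq_empty]

theorem IsSimplicialComplex.link (hX : IsSimplicialComplex X) (T : Finset V) :
    IsSimplicialComplex (link X T) := by
  intro η hη ρ hρ
  simp only [PaperKL.link, mem_filter, ← disjoint_iff_inter_eq_empty] at hη ⊢
  exact ⟨hX η hη.1 ρ hρ, hη.2.1.mono_left hρ, hX _ hη.2.2 _ (union_subset_union_left hρ)⟩

theorem IsSimplicialComplex.deleteVert (hX : IsSimplicialComplex X) (v : V) :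
    IsSimplicialComplex (deleteVert X v) := by
  intro η hη ρ hρ
  simp only [PaperKL.deleteVert, mem_filter] at hη ⊢
  exact ⟨hX η hη.1 ρ hρ, fun hv => hη.2 (hρ hv)⟩

theorem empty_mem_link (hX : IsSimplicialComplex X) (hv : v ∈ vertexSet X) :
    ∅ ∈ link X {v} :=
  mem_link_singleton.2
    ⟨hX.empty_mem ⟨_, hX.singleton_mem hv⟩, notMem_empty v, hX.singleton_mem hv⟩

theorem vertexSet_link_subset : vertexSet (link X {v}) ⊆ (vertexSet X).erase v := by
  intro u hu
  obtain ⟨η, hη, huη⟩ := mem_vertexSet.1 hu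
  obtain ⟨hηX, hvη, -⟩ := mem_link_singleton.1 hη
  exact mem_erase.2 ⟨fun h => hvη (h ▸ huη), mem_vertexSet.2 ⟨η, hηX, huη⟩⟩

theorem card_vertexSet_link_le_sub_two {u : V} (hu : u ∈ vertexSet X)
    (hv : v ∈ vertexSet X) (huv : u ≠ v) (huL : u ∉ vertexSet (link X {v})) :
    (vertexSet (link X {v})).card ≤ (vertexSet X).card - 2 := by
  have hsub : vertexSet (link X {v}) ⊆ ((vertexSet X).erase v).erase u :=
    fun w hw => mem_erase.2 ⟨fun h => huL (h ▸ hw), vertexSet_link_subset hw⟩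
  have := card_le_card hsub
  rwa [card_erase_of_mem (mem_erase.2 ⟨huv, hu⟩), card_erase_of_mem hv] at this

theorem vertexSet_deleteVert_subset : vertexSet (deleteVert X v) ⊆ (vertexSet X).erase v := by
  intro u hu
  obtain ⟨η, hη, huη⟩ := mem_vertexSet.1 hu
  obtain ⟨hηX, hvη⟩ := mem_filter.1 hη
  exact mem_erase.2 ⟨fun h => hvη (h ▸ huη), mem_vertexSet.2 ⟨η, hηX, huη⟩⟩

theorem deleteVert_union_image_insert_link (hX : IsSimplicialComplex X) :
    deleteVert X v ∪ (link X {v}).image (insert v) = X := by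
  ext η
  simp only [mem_union, PaperKL.deleteVert, mem_filter, mem_image, mem_link_singleton]
  by_cases hvη : v ∈ η
  · refine ⟨?_, fun hη => Or.inr ⟨η.erase v, ⟨hX η hη _ (erase_subset v η),
      notMem_erase v η, by rwa [insert_erase hvη]⟩, insert_erase hvη⟩⟩
    rintro (⟨-, hvη'⟩ | ⟨η', ⟨-, -, hη'⟩, rfl⟩)
    exacts [absurd hvη hvη', hη']
  · refine ⟨?_, fun hη => Or.inl ⟨hη, hvη⟩⟩
    rintro (⟨hη, -⟩ | ⟨η', -, rfl⟩)
    exacts [hη, absurd (mem_insert_self v η') hvη]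

theorem ElemCollapse.mono {c e : ℕ} (hce : c ≤ e) {Y : Finset (Finset V)}
    (h : ElemCollapse c X Y) : ElemCollapse e X Y := by
  obtain ⟨σ, τ, hf, hσ, rfl⟩ := h
  exact ⟨σ, τ, hf, hσ.trans hce, rfl⟩

theorem Collapsible.mono {c e : ℕ} (hce : c ≤ e) (h : Collapsible c X) : Collapsible e X :=
  Relation.ReflTransGen.mono (fun _ _ => ElemCollapse.mono hce) _ _ h

theorem ElemCollapse.subset {c : ℕ} {Y : Finset (Finset V)} (h : ElemCollapse c X Y) :
    Y ⊆ X := by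
  obtain ⟨σ, τ, -, -, rfl⟩ := h
  exact filter_subset _ _

theorem ElemCollapse.union_image_insert {c : ℕ} {D L L' : Finset (Finset V)}
    (hD : ∀ η ∈ D, v ∉ η) (hL : ∀ η ∈ L, v ∉ η) (h : ElemCollapse c L L') :
    ElemCollapse (c + 1) (D ∪ L.image (insert v)) (D ∪ L'.image (insert v)) := by
  obtain ⟨σ, τ, ⟨hσ, hτ, hστ, hmax⟩, hcard, rfl⟩ := h
  refine ⟨insert v σ, insert v τ, ⟨mem_union_right _ (mem_image_of_mem _ hσ),
    mem_union_right _ (mem_image_of_mem _ hτ), insert_subset_insert v hστ, ?_⟩,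
    (card_insert_le v σ).trans (Nat.add_le_add_right hcard 1), ?_⟩
  · simp only [mem_union, mem_image]
    rintro η (hη | ⟨η', hη', rfl⟩) hση
    · exact absurd (hση (mem_insert_self v σ)) (hD η hη)
    · exact insert_subset_insert v (hmax η' hη' ((insert_subset_insert_iff (hL σ hσ)).1 hση))
  · have hDfix : D.filter (fun η => ¬(insert v σ ⊆ η ∧ η ⊆ insert v τ)) = D :=
      filter_true_of_mem fun η hη hση => hD η hη (hση.1 (mem_insert_self v σ))
    rw [filter_union, filter_image, hDfix]
    congr 2
    refine filter_congr fun η hη => ?_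
    rw [insert_subset_insert_iff (hL σ hσ), insert_subset_insert_iff (hL η hη)]

theorem reflTransGen_union_image_insert {c : ℕ} {D L L' : Finset (Finset V)}
    (hD : ∀ η ∈ D, v ∉ η) (hL : ∀ η ∈ L, v ∉ η)
    (h : Relation.ReflTransGen (ElemCollapse c) L L') :
    Relation.ReflTransGen (ElemCollapse (c + 1))
      (D ∪ L.image (insert v)) (D ∪ L'.image (insert v)) := by
  induction h using Relation.ReflTransGen.head_induction_on with
  | refl => exact .refl
  | head hstep _ ih =>
    exact .head (hstep.union_image_insert hD hL) (ih fun η hη => hL η (hstep.subset hη))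

theorem collapsible_of_link_of_deleteVert (hX : IsSimplicialComplex X) {c e : ℕ}
    (hL : Collapsible c (link X {v})) (hD : Collapsible e (deleteVert X v)) :
    Collapsible (max (c + 1) e) X := by
  have hlift := reflTransGen_union_image_insert (D := deleteVert X v)
    (fun η hη => (mem_filter.1 hη).2) (fun η hη => (mem_link_singleton.1 hη).2.1) hL
  rw [deleteVert_union_image_insert_link hX, image_empty, union_empty] at hlift
  exact (Relation.ReflTransGen.mono (fun _ _ => ElemCollapse.mono (le_max_left _ _)) _ _
    hlift).trans (hD.mono (le_max_right _ _))

theorem collapsible_zero_of_vertexSet_mem (hX : IsSimplicialComplex X)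
    (hV : vertexSet X ∈ X) : Collapsible 0 X := by
  refine .single ⟨∅, vertexSet X, ⟨hX.empty_mem ⟨_, hV⟩, hV, empty_subset _,
    fun η hη _ => subset_vertexSet hη⟩, le_rfl, ?_⟩
  rw [eq_comm, filter_eq_empty_iff]
  exact fun η hη h => h ⟨empty_subset η, subset_vertexSet hη⟩

theorem exists_isMissingFace_subset {S : Finset V} (hS : S ⊆ vertexSet X) (h : S ∉ X) :
    ∃ τ ⊆ S, IsMissingFace X τ := by
  induction S using Finset.strongInduction with
  | H S ih =>
  by_cases hsub : ∀ σ ⊂ S, σ ∈ X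
  · exact ⟨S, subset_rfl, hS, h, hsub⟩
  · push Not at hsub
    obtain ⟨σ, hσS, hσ⟩ := hsub
    obtain ⟨τ, hτσ, hτ⟩ := ih σ hσS (hσS.subset.trans hS) hσ
    exact ⟨τ, hτσ.trans hσS.subset, hτ⟩

theorem IsMissingFace.of_deleteVert (h : IsMissingFace (deleteVert X v) ρ) :
    IsMissingFace X ρ := by
  obtain ⟨hρV, hρ, hsub⟩ := h
  have hvρ : v ∉ ρ := fun hv => (mem_erase.1 (vertexSet_deleteVert_subset (hρV hv))).1 rfl
  exact ⟨hρV.trans (vertexSet_deleteVert_subset.trans (erase_subset v _)),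
    fun hρX => hρ (mem_filter.2 ⟨hρX, hvρ⟩), fun σ hσ => (mem_filter.1 (hsub σ hσ)).1⟩

theorem IsMissingFace.of_link (hX : IsSimplicialComplex X) (hv : v ∈ vertexSet X)
    (h : IsMissingFace (link X {v}) ρ) : IsMissingFace X ρ ∨ IsMissingFace X (insert v ρ) := by
  obtain ⟨hρV, hρ, hsub⟩ := h
  have hρV' : ρ ⊆ (vertexSet X).erase v := hρV.trans vertexSet_link_subset
  have hvρ : v ∉ ρ := fun h => (mem_erase.1 (hρV' h)).1 rfl
  by_cases hρX : ρ ∈ X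
  · refine .inr ⟨insert_subset hv (hρV'.trans (erase_subset v _)),
      fun h => hρ (mem_link_singleton.2 ⟨hρX, hvρ, h⟩), fun σ hσ => ?_⟩
    by_cases hvσ : v ∈ σ
    · have hσρ : σ.erase v ⊂ ρ := by
        refine ssubset_of_subset_of_ne (subset_insert_iff.1 hσ.subset) fun heq => ?_
        exact hσ.ne (by rw [← heq, insert_erase hvσ])
      simpa [insert_erase hvσ] using (mem_link_singleton.1 (hsub _ hσρ)).2.2
    · exact hX ρ hρX σ ((subset_insert_iff_of_notMem hvσ).1 hσ.subset)
  · exact .inl ⟨hρV'.trans (erase_subset v _), hρX,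
      fun σ hσ => (mem_link_singleton.1 (hsub σ hσ)).1⟩

theorem erase_notMem_link {τ : Finset V} (hvτ : v ∈ τ) (hτ : τ ∉ X) :
    τ.erase v ∉ link X {v} := fun h => hτ (by
  simpa [insert_erase hvτ] using (mem_link_singleton.1 h).2.2)

theorem collapsible_of_forall_isMissingFace (hX : IsSimplicialComplex X)
    (hmf : ∀ τ : Finset V, IsMissingFace X τ → τ.card ≤ d + 1)
    (h : ∀ τ : Finset V, IsMissingFace X τ →
      Collapsible (τ.card - 1 + d * ((vertexSet X).card - τ.card) / (d + 1)) X) :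
    Collapsible (d * (vertexSet X).card / (d + 1)) X := by
  by_cases hτ : ∃ τ, IsMissingFace X τ
  · obtain ⟨τ, hτ⟩ := hτ
    exact (h τ hτ).mono (sub_one_add_mul_sub_div_succ_le (hmf τ hτ) (card_le_card hτ.1))
  · have hV : vertexSet X ∈ X := by
      by_contra hV
      obtain ⟨τ, -, hτ'⟩ := exists_isMissingFace_subset subset_rfl hV
      exact hτ ⟨τ, hτ'⟩
    exact (collapsible_zero_of_vertexSet_mem hX hV).mono (Nat.zero_le _)

theorem card_le_of_isMissingFace_link (hX : IsSimplicialComplex X)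
    (hv : v ∈ vertexSet X) (hmf : ∀ τ : Finset V, IsMissingFace X τ → τ.card ≤ d + 1)
    (hρ : IsMissingFace (link X {v}) ρ) : ρ.card ≤ d + 1 :=
  (hρ.of_link hX hv).elim (hmf ρ) fun h => (card_le_card (subset_insert v ρ)).trans (hmf _ h)

theorem exists_collapsible_link_add_one_le {m : ℕ}
    (ih : ∀ Y : Finset (Finset V), IsSimplicialComplex Y →
      (∀ ρ : Finset V, IsMissingFace Y ρ → ρ.card ≤ d + 1) → (vertexSet Y).card < m →
      ∀ ρ : Finset V, IsMissingFace Y ρ →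
        Collapsible (ρ.card - 1 + d * ((vertexSet Y).card - ρ.card) / (d + 1)) Y)
    (hX : IsSimplicialComplex X) (hmf : ∀ τ : Finset V, IsMissingFace X τ → τ.card ≤ d + 1)
    (hm : (vertexSet X).card = m) {τ : Finset V} (hτ : IsMissingFace X τ) (hvτ : v ∈ τ) :
    ∃ c, c + 1 ≤ τ.card - 1 + d * (m - τ.card) / (d + 1) ∧ Collapsible c (link X {v}) := by
  have hv : v ∈ vertexSet X := hτ.1 hvτ
  have hkm : τ.card ≤ m := hm ▸ card_le_card hτ.1
  have hLm := (card_le_card (vertexSet_link_subset (X := X) (v := v))).trans_eq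
    (card_erase_of_mem hv)
  have hmfL := fun ρ => card_le_of_isMissingFace_link (ρ := ρ) hX hv hmf
  by_cases hsub : τ.erase v ⊆ vertexSet (link X {v})
  · obtain ⟨ρ, hρτ, hρ⟩ := exists_isMissingFace_subset hsub (erase_notMem_link hvτ hτ.2.1)
    have hρ0 : 0 < ρ.card :=
      card_pos.2 (nonempty_iff_ne_empty.2 fun h => hρ.2.1 (h ▸ empty_mem_link hX hv))
    have hρk := (card_le_card hρτ).trans_eq (card_erase_of_mem hvτ)
    refine ⟨_, ?_, ih _ (hX.link {v}) hmfL (by omega) ρ hρ⟩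
    have := mul_div_succ_le_of_le_add (d := d) (y := m - τ.card)
      (x := (vertexSet (link X {v})).card - ρ.card) (j := τ.card - 1 - ρ.card) (by omega)
    omega
  · obtain ⟨u, hu, huL⟩ := not_subset.1 hsub
    have hLm' := card_vertexSet_link_le_sub_two (hτ.1 (mem_of_mem_erase hu)) hv
      (ne_of_mem_erase hu) huL
    have hk2 := (card_pos.2 ⟨u, hu⟩).trans_eq (card_erase_of_mem hvτ)
    refine ⟨_, ?_, collapsible_of_forall_isMissingFace (hX.link {v}) hmfL
      (ih _ (hX.link {v}) hmfL (by omega))⟩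
    have := mul_div_succ_le_of_le_add (d := d) (y := m - τ.card)
      (x := (vertexSet (link X {v})).card) (j := τ.card - 2) (by omega)
    omega

theorem collapsible_of_isMissingFace (hX : IsSimplicialComplex X)
    (hmf : ∀ τ : Finset V, IsMissingFace X τ → τ.card ≤ d + 1)
    {τ : Finset V} (hτ : IsMissingFace X τ) :
    Collapsible (τ.card - 1 + d * ((vertexSet X).card - τ.card) / (d + 1)) X := by
  induction hm : (vertexSet X).card using Nat.strong_induction_on generalizing X τ with
  | _ m ih =>
  rcases τ.eq_empty_or_nonempty with rfl | ⟨v, hvτ⟩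
  · rw [not_nonempty_iff_eq_empty.1 fun hne => hτ.2.1 (hX.empty_mem hne)]
    exact .refl
  have hv : v ∈ vertexSet X := hτ.1 hvτ
  have hkm : τ.card ≤ m := hm ▸ card_le_card hτ.1
  have hk : 0 < τ.card := card_pos.2 ⟨v, hvτ⟩
  have hDm := (card_le_card (vertexSet_deleteVert_subset (X := X) (v := v))).trans_eq
    (card_erase_of_mem hv)
  have hD : Collapsible (τ.card - 1 + d * (m - τ.card) / (d + 1)) (deleteVert X v) := by
    have hmfD : ∀ ρ, IsMissingFace (deleteVert X v) ρ → ρ.card ≤ d + 1 :=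
      fun ρ hρ => hmf ρ hρ.of_deleteVert
    refine (collapsible_of_forall_isMissingFace (hX.deleteVert v) hmfD fun ρ hρ =>
      ih _ (by omega) (hX.deleteVert v) hmfD hρ rfl).mono (mul_div_succ_le_of_le_add ?_)
    omega
  obtain ⟨c, hc, hL⟩ := exists_collapsible_link_add_one_le
    (fun Y hY hmfY hlt ρ hρ => ih _ hlt hY hmfY hρ rfl) hX hmf hm hτ hvτ
  exact (collapsible_of_link_of_deleteVert hX hL hD).mono (max_le hc le_rfl)

end

/-- If all missing faces of `X` have dimension at most `d`
(size at most `d + 1`), then `C(X) ≤ ⌊d·|V| / (d + 1)⌋` where `V` is the vertex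
set of `X`. -/
theorem collapseNum_le_of_missingFaces_small {V : Type*} [DecidableEq V]
    (X : Finset (Finset V)) (hX : IsSimplicialComplex X) (d : ℕ)
    (hmf : ∀ τ : Finset V, IsMissingFace X τ → τ.card ≤ d + 1) :
    collapseNum X ≤ d * (vertexSet X).card / (d + 1) :=
  Nat.sInf_le (collapsible_of_forall_isMissingFace hX hmf fun _ hτ =>
    collapsible_of_isMissingFace hX hmf hτ)

end PaperKL
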